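/- The Laplace transform of the function t ↦ e^{−bt/2} L_n(bt), where L_n is the n-th Laguerre polynomial and b > 0, equals (p − b/2)^n / (p + b/2)^{n+1} for complex p with Re(p) > −b/2. -/

import Mathlib

/-!
With `s = p + b / 2`, expanding `L_n` writes the integrand as
`∑ₖ C(n,k) (-b)^k / k! · t^k e^{-st}`. Integrating by parts,
`∫₀^∞ t^{k+1} e^{-st} dt = (k+1)/s · ∫₀^∞ t^k e^{-st} dt`,
so `∫₀^∞ t^k e^{-st} dt = k!/s^{k+1}` whenever `Re s > 0`. The factorials cancel, and the binomial theorem sums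
`∑ₖ C(n,k) (-b)^k / s^{k+1}` to `(s - b)^n / s^{n+1} = (p - b/2)^n / (p + b/2)^{n+1}`.
-/

open MeasureTheory Complex

/-- The `n`-th Laguerre polynomial, `L_n(x) = ∑_{k=0}^n C(n,k) (−x)^k / k!`. -/
noncomputable def laguerre (n : ℕ) (x : ℂ) : ℂ :=
  ∑ k ∈ Finset.range (n + 1), (n.choose k : ℂ) * (-x) ^ k / (Nat.factorial k : ℂ)

open Set Filter Topology

section PowMulExpNegMul

variable {s : ℂ}

lemma norm_pow_mul_cexp_neg_mul (n : ℕ) (t : ℝ) :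
    ‖(t : ℂ) ^ n * cexp (-(s * t))‖ = |t| ^ n * Real.exp (-s.re * t) := by
  simp [norm_exp, neg_mul]

lemma hasDerivAt_pow_succ_mul_cexp_neg_mul (n : ℕ) (t : ℝ) :
    HasDerivAt (fun t : ℝ => (t : ℂ) ^ (n + 1) * cexp (-(s * t)))
      ((n + 1) * ((t : ℂ) ^ n * cexp (-(s * t)))
        - s * ((t : ℂ) ^ (n + 1) * cexp (-(s * t)))) t := by
  have hpow := (hasDerivAt_pow (n + 1) (t : ℂ)).comp_ofReal
  have hexp : HasDerivAt (fun z : ℂ => cexp (-(s * z))) (cexp (-(s * t)) * -s) t := by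
    simpa using ((hasDerivAt_id (t : ℂ)).const_mul s).neg.cexp
  exact (hpow.mul hexp.comp_ofReal).congr_deriv (by push_cast; ring)

lemma integrableOn_pow_mul_cexp_neg_mul (hs : 0 < s.re) (n : ℕ) :
    IntegrableOn (fun t : ℝ => (t : ℂ) ^ n * cexp (-(s * t))) (Ioi 0) := by
  have hreal :
      IntegrableOn (fun t : ℝ => t ^ (n : ℝ) * Real.exp (-s.re * t ^ (1 : ℝ))) (Ioi 0) :=
    integrableOn_rpow_mul_exp_neg_mul_rpow (by linarith [n.cast_nonneg (α := ℝ)]) one_pos hs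
  refine Integrable.mono' hreal (by fun_prop) ?_
  filter_upwards [ae_restrict_mem measurableSet_Ioi] with t (ht : 0 < t)
  rw [norm_pow_mul_cexp_neg_mul, abs_of_pos ht, Real.rpow_one, Real.rpow_natCast]

lemma tendsto_pow_mul_cexp_neg_mul_atTop (hs : 0 < s.re) (n : ℕ) :
    Tendsto (fun t : ℝ => (t : ℂ) ^ n * cexp (-(s * t))) atTop (𝓝 0) := by
  rw [tendsto_zero_iff_norm_tendsto_zero]
  refine (tendsto_rpow_mul_exp_neg_mul_atTop_nhds_zero n s.re hs).congr' ?_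
  filter_upwards [eventually_ge_atTop 0] with t ht
  rw [norm_pow_mul_cexp_neg_mul, abs_of_nonneg ht, Real.rpow_natCast, neg_mul]

lemma integral_pow_succ_mul_cexp_neg_mul (hs : 0 < s.re) (n : ℕ) :
    ∫ t in Ioi (0 : ℝ), (t : ℂ) ^ (n + 1) * cexp (-(s * t))
      = (n + 1) / s * ∫ t in Ioi (0 : ℝ), (t : ℂ) ^ n * cexp (-(s * t)) := by
  have hs0 : s ≠ 0 := fun h => by simp [h] at hs
  have hint (k : ℕ) (c : ℂ) := (integrableOn_pow_mul_cexp_neg_mul hs k).const_mul c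
  have hFTC := integral_Ioi_of_hasDerivAt_of_tendsto' (a := 0)
    (fun t _ => hasDerivAt_pow_succ_mul_cexp_neg_mul n t) ((hint n _).sub (hint (n + 1) _))
    (tendsto_pow_mul_cexp_neg_mul_atTop hs (n + 1))
  rw [integral_sub (hint n _) (hint (n + 1) _), integral_const_mul, integral_const_mul] at hFTC
  simp only [ofReal_zero, zero_pow n.succ_ne_zero, zero_mul, sub_zero] at hFTC
  field_simp
  linear_combination -hFTC

lemma integral_pow_mul_cexp_neg_mul (hs : 0 < s.re) (n : ℕ) :
    ∫ t in Ioi (0 : ℝ), (t : ℂ) ^ n * cexp (-(s * t)) = n.factorial / s ^ (n + 1) := by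
  induction n with
  | zero =>
    simpa [neg_mul] using integral_exp_mul_complex_Ioi (a := -s) (by simpa using hs) 0
  | succ n ih =>
    rw [integral_pow_succ_mul_cexp_neg_mul hs, ih, Nat.factorial_succ]
    push_cast
    ring

end PowMulExpNegMul

lemma sum_choose_mul_pow_div_pow_succ {K : Type*} [Field K] {s : K} (hs : s ≠ 0) (c : K)
    (n : ℕ) :
    ∑ k ∈ Finset.range (n + 1), (n.choose k : K) * c ^ k / s ^ (k + 1)
      = (s + c) ^ n / s ^ (n + 1) := by
  rw [add_comm s, add_pow, Finset.sum_div]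
  refine Finset.sum_congr rfl fun k hk => ?_
  obtain ⟨m, rfl⟩ := Nat.exists_eq_add_of_le (Finset.mem_range_succ_iff.mp hk)
  rw [Nat.add_sub_cancel_left]
  field_simp
  ring

lemma exp_mul_laguerre_mul_cexp (n : ℕ) (b : ℝ) (p : ℂ) (t : ℝ) :
    (Real.exp (-b * t / 2) : ℂ) * laguerre n ((b : ℂ) * t) * cexp (-p * t)
      = ∑ k ∈ Finset.range (n + 1), (n.choose k * (-b) ^ k / k.factorial : ℂ)
          * ((t : ℂ) ^ k * cexp (-((p + b / 2) * t))) := by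
  have hexp : (Real.exp (-b * t / 2) : ℂ) * cexp (-p * t) = cexp (-((p + b / 2) * t)) := by
    rw [ofReal_exp, ← Complex.exp_add]
    push_cast
    ring_nf
  rw [laguerre, Finset.mul_sum, Finset.sum_mul, ← hexp]
  refine Finset.sum_congr rfl fun k _ => ?_
  ring

theorem laplace_transform_laguerre_general (n : ℕ) (b : ℝ)
    (p : ℂ) (hp : -(b / 2) < p.re) :
    ∫ t in Set.Ioi (0 : ℝ),
        (Real.exp (-b * t / 2) : ℂ) * laguerre n ((b : ℂ) * t) * Complex.exp (-p * t)
      = (p - b / 2) ^ n / (p + b / 2) ^ (n + 1) := by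
  set s : ℂ := p + b / 2
  have hs : 0 < s.re := by
    simp [s]
    linarith
  have hs0 : s ≠ 0 := fun h => by simp [h] at hs
  calc _ = ∫ t in Ioi (0 : ℝ), ∑ k ∈ Finset.range (n + 1),
            (n.choose k * (-b) ^ k / k.factorial : ℂ) * ((t : ℂ) ^ k * cexp (-(s * t))) :=
        setIntegral_congr_fun measurableSet_Ioi fun t _ => exp_mul_laguerre_mul_cexp n b p t
    _ = ∑ k ∈ Finset.range (n + 1), (n.choose k * (-b) ^ k / k.factorial : ℂ)
          * (k.factorial / s ^ (k + 1)) := by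
        rw [integral_finsetSum _ fun k _ => (integrableOn_pow_mul_cexp_neg_mul hs k).const_mul _]
        simp_rw [integral_const_mul, integral_pow_mul_cexp_neg_mul hs]
    _ = ∑ k ∈ Finset.range (n + 1), (n.choose k : ℂ) * (-b) ^ k / s ^ (k + 1) := by
        refine Finset.sum_congr rfl fun k _ => ?_
        field_simp [k.factorial_ne_zero]
    _ = (s + -b) ^ n / s ^ (n + 1) := sum_choose_mul_pow_div_pow_succ hs0 _ n
    _ = _ := by ring

theorem laplace_transform_laguerre (n : ℕ) (b : ℝ) (hb : 0 < b)
    (p : ℂ) (hp : -(b / 2) < p.re) :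
    ∫ t in Set.Ioi (0 : ℝ),
        (Real.exp (-b * t / 2) : ℂ) * laguerre n ((b : ℂ) * t) * Complex.exp (-p * t)
      = (p - b / 2) ^ n / (p + b / 2) ^ (n + 1) :=
  laplace_transform_laguerre_general n b p hp
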